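/- Let F_G be symmetric positive definite, D positive definite with D² ≤ κ²F_G, and T(u) = (1/6)⟨T₃, u^{⊗3}⟩ a symmetric trilinear form satisfying |⟨T₃, h₁⊗h₂⊗h₃⟩| ≤ τ₃||Dh₁||·||Dh₂||·||Dh₃||. For A ∈ R^p let a = -F_G^{-1}(A + ∇T(F_G^{-1}A)). Then ||D^{-1}F_G(a + F_G^{-1}A)|| ≤ (τ₃/2)||D F_G^{-1} A||², and if κ²τ₃||D F_G^{-1} A|| ≤ 4/9 then ||D a|| ≤ (11/9)||D F_G^{-1} A||. -/

import Mathlib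

open Matrix

noncomputable def vnorm {p : ℕ} (x : Fin p → ℝ) : ℝ := Real.sqrt (x ⬝ᵥ x)

/-!
Write `u = F_G⁻¹ A` and `g = ∇T(u)`, so that `F_G (a + u) = -g`. The first bound is a dual-norm
estimate: pairing `g` with `h = D⁻²g` gives `‖D⁻¹g‖² = ½ ⟨T₃, u ⊗ u ⊗ h⟩ ≤ (τ₃/2) ‖Du‖² ‖D⁻¹g‖`.
For the second, `D² ≤ κ² F_G` yields `‖D F_G⁻¹ x‖ ≤ κ² ‖D⁻¹ x‖`, hence
`‖Da‖ ≤ ‖Du‖ + κ² (τ₃/2) ‖Du‖² ≤ (1 + 2/9) ‖Du‖`.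
-/

section vnorm

variable {p : ℕ}

lemma vnorm_eq_norm (x : Fin p → ℝ) : vnorm x = ‖WithLp.toLp 2 x‖ := by
  rw [EuclideanSpace.norm_eq, vnorm, dotProduct]
  simp only [Real.norm_eq_abs, sq_abs, ← sq]

lemma dotProduct_eq_inner (x y : Fin p → ℝ) :
    x ⬝ᵥ y = inner ℝ (WithLp.toLp 2 x) (WithLp.toLp 2 y) := by
  rw [EuclideanSpace.inner_toLp_toLp, star_trivial, dotProduct_comm]

lemma vnorm_nonneg (x : Fin p → ℝ) : 0 ≤ vnorm x := Real.sqrt_nonneg _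

lemma vnorm_neg (x : Fin p → ℝ) : vnorm (-x) = vnorm x := by
  simp only [vnorm, neg_dotProduct_neg]

lemma vnorm_add_le (x y : Fin p → ℝ) : vnorm (x + y) ≤ vnorm x + vnorm y := by
  simpa only [vnorm_eq_norm, WithLp.toLp_add] using norm_add_le _ _

lemma dotProduct_le_vnorm_mul_vnorm (x y : Fin p → ℝ) : x ⬝ᵥ y ≤ vnorm x * vnorm y := by
  simpa only [dotProduct_eq_inner, vnorm_eq_norm] using real_inner_le_norm _ _

lemma dotProduct_self_eq_vnorm_mul_self (x : Fin p → ℝ) : x ⬝ᵥ x = vnorm x * vnorm x := by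
  rw [dotProduct_eq_inner, vnorm_eq_norm, real_inner_self_eq_norm_mul_norm]

end vnorm

lemma le_of_mul_self_le_mul {x c : ℝ} (hc : 0 ≤ c) (h : x * x ≤ c * x) : x ≤ c := by
  rcases le_or_gt x 0 with hx | hx
  · linarith
  · exact le_of_mul_le_mul_right h hx

section SymmetricWeight

variable {p : ℕ} {D : Matrix (Fin p) (Fin p) ℝ}

lemma Matrix.IsSymm.mulVec_dotProduct (hD : D.IsSymm) (x y : Fin p → ℝ) :
    (D *ᵥ x) ⬝ᵥ y = x ⬝ᵥ (D *ᵥ y) := by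
  rw [dotProduct_mulVec, ← mulVec_transpose, hD.eq, dotProduct_comm]

lemma vnorm_inv_mulVec_le_of_dotProduct_le (hD : D.IsSymm) (hDdet : IsUnit D.det)
    {c : ℝ} (hc : 0 ≤ c) {g : Fin p → ℝ} (hg : ∀ h, g ⬝ᵥ h ≤ c * vnorm (D *ᵥ h)) :
    vnorm (D⁻¹ *ᵥ g) ≤ c := by
  apply le_of_mul_self_le_mul hc
  have hDDg : D *ᵥ (D⁻¹ *ᵥ (D⁻¹ *ᵥ g)) = D⁻¹ *ᵥ g := by
    rw [mulVec_mulVec, mul_nonsing_inv D hDdet, one_mulVec]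
  calc vnorm (D⁻¹ *ᵥ g) * vnorm (D⁻¹ *ᵥ g)
      = g ⬝ᵥ (D⁻¹ *ᵥ (D⁻¹ *ᵥ g)) := by
        rw [← dotProduct_self_eq_vnorm_mul_self, hD.inv.mulVec_dotProduct]
    _ ≤ c * vnorm (D⁻¹ *ᵥ g) := by simpa only [hDDg] using hg (D⁻¹ *ᵥ (D⁻¹ *ᵥ g))

lemma vnorm_mulVec_inv_le_of_posSemidef (hD : D.IsSymm) (hDdet : IsUnit D.det)
    {FG : Matrix (Fin p) (Fin p) ℝ} (hFGdet : IsUnit FG.det) {κ : ℝ}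
    (hDFG : (κ ^ 2 • FG - D * D).PosSemidef) (x : Fin p → ℝ) :
    vnorm (D *ᵥ FG⁻¹ *ᵥ x) ≤ κ ^ 2 * vnorm (D⁻¹ *ᵥ x) := by
  set y := FG⁻¹ *ᵥ x
  have hFGy : FG *ᵥ y = x := by
    rw [mulVec_mulVec, mul_nonsing_inv FG hFGdet, one_mulVec]
  have hDD : y ⬝ᵥ ((D * D) *ᵥ y) ≤ κ ^ 2 * (y ⬝ᵥ (FG *ᵥ y)) := by
    have := hDFG.dotProduct_mulVec_nonneg y
    rw [star_trivial, sub_mulVec, smul_mulVec, dotProduct_sub, dotProduct_smul,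
      smul_eq_mul] at this
    linarith
  have hyx : y ⬝ᵥ x = (D *ᵥ y) ⬝ᵥ (D⁻¹ *ᵥ x) := by
    rw [hD.mulVec_dotProduct, mulVec_mulVec, mul_nonsing_inv D hDdet, one_mulVec]
  apply le_of_mul_self_le_mul (mul_nonneg (sq_nonneg κ) (vnorm_nonneg _))
  calc vnorm (D *ᵥ y) * vnorm (D *ᵥ y) = y ⬝ᵥ ((D * D) *ᵥ y) := by
        rw [← dotProduct_self_eq_vnorm_mul_self, hD.mulVec_dotProduct, mulVec_mulVec]
    _ ≤ κ ^ 2 * (y ⬝ᵥ x) := by rwa [hFGy] at hDD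
    _ ≤ κ ^ 2 * (vnorm (D *ᵥ y) * vnorm (D⁻¹ *ᵥ x)) := by
        rw [hyx]
        exact mul_le_mul_of_nonneg_left (dotProduct_le_vnorm_mul_vnorm _ _) (sq_nonneg κ)
    _ = κ ^ 2 * vnorm (D⁻¹ *ᵥ x) * vnorm (D *ᵥ y) := by ring

lemma vnorm_inv_mulVec_gradient_le (hD : D.IsSymm) (hDdet : IsUnit D.det)
    (T3 : MultilinearMap ℝ (fun _ : Fin 3 => (Fin p → ℝ)) ℝ) {τ₃ : ℝ} (hτ₃ : 0 ≤ τ₃)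
    (hT3 : ∀ h₁ h₂ h₃ : Fin p → ℝ,
      |T3 ![h₁, h₂, h₃]| ≤ τ₃ * vnorm (D *ᵥ h₁) * vnorm (D *ᵥ h₂) * vnorm (D *ᵥ h₃))
    {u g : Fin p → ℝ} (hg : ∀ h, g ⬝ᵥ h = (1 / 2) * T3 ![u, u, h]) :
    vnorm (D⁻¹ *ᵥ g) ≤ τ₃ / 2 * vnorm (D *ᵥ u) ^ 2 := by
  refine vnorm_inv_mulVec_le_of_dotProduct_le hD hDdet (by positivity) fun h => ?_
  have := (le_abs_self _).trans (hT3 u u h)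
  rw [hg]
  linarith

end SymmetricWeight

theorem stmt18_general {p : ℕ} (FG D : Matrix (Fin p) (Fin p) ℝ)
    (hFG : FG.PosDef) (hDpd : D.PosDef)
    (κ : ℝ) (hD : (κ ^ 2 • FG - D * D).PosSemidef)
    (T3 : MultilinearMap ℝ (fun _ : Fin 3 => (Fin p → ℝ)) ℝ)
    (τ₃ : ℝ) (hτ₃ : 0 ≤ τ₃)
    (hT3 : ∀ h₁ h₂ h₃ : Fin p → ℝ,
      |T3 ![h₁, h₂, h₃]| ≤ τ₃ * vnorm (D *ᵥ h₁) * vnorm (D *ᵥ h₂) * vnorm (D *ᵥ h₃))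
    (gradT : (Fin p → ℝ) → Fin p → ℝ)
    (hgradT : ∀ u h, gradT u ⬝ᵥ h = (1 / 2) * T3 ![u, u, h])
    (A : Fin p → ℝ)
    (a : Fin p → ℝ) (ha : a = -(FG⁻¹ *ᵥ (A + gradT (FG⁻¹ *ᵥ A)))) :
    vnorm (D⁻¹ *ᵥ FG *ᵥ (a + FG⁻¹ *ᵥ A)) ≤ τ₃ / 2 * vnorm (D *ᵥ FG⁻¹ *ᵥ A) ^ 2 ∧
      (κ ^ 2 * τ₃ * vnorm (D *ᵥ FG⁻¹ *ᵥ A) ≤ 4 / 9 →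
        vnorm (D *ᵥ a) ≤ 11 / 9 * vnorm (D *ᵥ FG⁻¹ *ᵥ A)) := by
  have hDsymm : D.IsSymm := isHermitian_iff_isSymm.1 hDpd.1
  have hDdet : IsUnit D.det := isUnit_iff_ne_zero.2 hDpd.det_pos.ne'
  have hFGdet : IsUnit FG.det := isUnit_iff_ne_zero.2 hFG.det_pos.ne'
  set u := FG⁻¹ *ᵥ A
  set g := gradT u
  have hau : a + u = -(FG⁻¹ *ᵥ g) := by rw [ha, mulVec_add]; abel
  have hg := vnorm_inv_mulVec_gradient_le hDsymm hDdet T3 hτ₃ hT3 (hgradT u)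
  refine ⟨?_, fun hsmall => ?_⟩
  · rwa [hau, mulVec_neg, mulVec_mulVec, mul_nonsing_inv FG hFGdet, one_mulVec,
      mulVec_neg, vnorm_neg]
  · have hFGg := vnorm_mulVec_inv_le_of_posSemidef hDsymm hDdet hFGdet hD g
    have hDa : D *ᵥ a = -(D *ᵥ u + D *ᵥ FG⁻¹ *ᵥ g) := by
      rw [eq_sub_of_add_eq hau, mulVec_sub, mulVec_neg]; abel
    have htri := vnorm_add_le (D *ᵥ u) (D *ᵥ FG⁻¹ *ᵥ g)
    rw [hDa, vnorm_neg]
    nlinarith [mul_le_mul_of_nonneg_left hg (sq_nonneg κ), vnorm_nonneg (D *ᵥ u)]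

/-- Properties of the third-order corrected bias vector
`a = -F_G⁻¹(A + ∇T(F_G⁻¹A))`. -/
theorem stmt18 {p : ℕ} (FG D : Matrix (Fin p) (Fin p) ℝ)
    (hFG : FG.PosDef) (hDpd : D.PosDef)
    (κ : ℝ) (hκ : 0 < κ) (hD : (κ ^ 2 • FG - D * D).PosSemidef)
    (T3 : MultilinearMap ℝ (fun _ : Fin 3 => (Fin p → ℝ)) ℝ)
    (hsym : ∀ h₁ h₂ h₃ : Fin p → ℝ,
      T3 ![h₁, h₂, h₃] = T3 ![h₂, h₁, h₃] ∧ T3 ![h₁, h₂, h₃] = T3 ![h₁, h₃, h₂])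
    (τ₃ : ℝ) (hτ₃ : 0 ≤ τ₃)
    (hT3 : ∀ h₁ h₂ h₃ : Fin p → ℝ,
      |T3 ![h₁, h₂, h₃]| ≤ τ₃ * vnorm (D *ᵥ h₁) * vnorm (D *ᵥ h₂) * vnorm (D *ᵥ h₃))
    (gradT : (Fin p → ℝ) → Fin p → ℝ)
    (hgradT : ∀ u h, gradT u ⬝ᵥ h = (1 / 2) * T3 ![u, u, h])
    (A : Fin p → ℝ)
    (a : Fin p → ℝ) (ha : a = -(FG⁻¹ *ᵥ (A + gradT (FG⁻¹ *ᵥ A)))) :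
    vnorm (D⁻¹ *ᵥ FG *ᵥ (a + FG⁻¹ *ᵥ A)) ≤ τ₃ / 2 * vnorm (D *ᵥ FG⁻¹ *ᵥ A) ^ 2 ∧
      (κ ^ 2 * τ₃ * vnorm (D *ᵥ FG⁻¹ *ᵥ A) ≤ 4 / 9 →
        vnorm (D *ᵥ a) ≤ 11 / 9 * vnorm (D *ᵥ FG⁻¹ *ᵥ A)) :=
  stmt18_general FG D hFG hDpd κ hD T3 τ₃ hτ₃ hT3 gradT hgradT A a ha
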